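/- arXiv:2604.24894 — 2 statements merged into one kernel-verified Lean document; each statement's English description precedes it below -/
import Mathlib

section
/- Let M, B, C, Φ̄ˣ, Φ̄ᵘ, Φ̂ˣ, Φ̂ʸ be square/compatible real matrices satisfying M·Φ̄ˣ − B·Φ̄ᵘ = I and Φ̂ˣ·M − Φ̂ʸ·C = I. Define Φˣʷ = Φ̄ˣ + Φ̂ˣ − Φ̄ˣ·M·Φ̂ˣ and Φᵘʷ = Φ̄ᵘ·(I − M·Φ̂ˣ). Then M·Φˣʷ − B·Φᵘʷ = I. -/
open Matrix

/-- Left SLS constraint, w-channel: feasibility of the double-Riccati assembly. -/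
theorem sls_left_constraint_w_channel (n m p : ℕ)
    (M : Matrix (Fin n) (Fin n) ℝ) (B : Matrix (Fin n) (Fin m) ℝ)
    (C : Matrix (Fin p) (Fin n) ℝ)
    (Φbarx : Matrix (Fin n) (Fin n) ℝ) (Φbaru : Matrix (Fin m) (Fin n) ℝ)
    (Φhatx : Matrix (Fin n) (Fin n) ℝ) (Φhaty : Matrix (Fin n) (Fin p) ℝ)
    (hbar : M * Φbarx - B * Φbaru = 1)
    (hhat : Φhatx * M - Φhaty * C = 1) :
    M * (Φbarx + Φhatx - Φbarx * M * Φhatx) - B * (Φbaru * (1 - M * Φhatx)) = 1 := by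
  calc M * (Φbarx + Φhatx - Φbarx * M * Φhatx) - B * (Φbaru * (1 - M * Φhatx))
      = (M * Φbarx - B * Φbaru) * (1 - M * Φhatx) + M * Φhatx := by
        simp only [Matrix.mul_sub, Matrix.mul_add, Matrix.mul_one, Matrix.sub_mul,
          Matrix.one_mul, Matrix.add_mul, ← Matrix.mul_assoc]
        abel
    _ = 1 := by rw [hbar]; simp [Matrix.sub_mul, Matrix.mul_sub]
end

section
/- Suppose the closed-loop SLS identities hold: [I − ZA, −ZB]·Φ = [I, 0] and Φ·[(I − ZA); −ZC] = [I; 0], with Φ = [[Φˣʷ, Φˣᵉ],[Φᵘʷ, Φᵘᵉ]] and Φˣʷ invertible. Then with K := Φᵘᵉ − Φᵘʷ·(Φˣʷ)⁻¹·Φˣᵉ, the deviations Δx = Φˣʷ E w + Φˣᵉ F e and Δu = Φᵘʷ E w + Φᵘᵉ F e satisfy Δu = K·Δy, where Δy = ZC·Δx + F e is generated by the LTV error dynamics Δx = ZA·Δx + ZB·Δu + E w. -/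
open Matrix

/-- Controller recovery in output-feedback SLS (Proposition 1): if the closed-loop
SLS identities hold and `Φˣʷ` is invertible, then with
`K = Φᵘᵉ − Φᵘʷ (Φˣʷ)⁻¹ Φˣᵉ`, the deviations generated by the response maps
satisfy `Δu = K Δy` with `Δy = ZC Δx + F e`. -/
theorem sls_controller_recovery (Nx Nu Ny : ℕ)
    (ZA : Matrix (Fin Nx) (Fin Nx) ℝ) (ZB : Matrix (Fin Nx) (Fin Nu) ℝ)
    (ZC : Matrix (Fin Ny) (Fin Nx) ℝ)
    (E : Matrix (Fin Nx) (Fin Nx) ℝ) (F : Matrix (Fin Ny) (Fin Ny) ℝ)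
    (Φxw : Matrix (Fin Nx) (Fin Nx) ℝ) (Φxe : Matrix (Fin Nx) (Fin Ny) ℝ)
    (Φuw : Matrix (Fin Nu) (Fin Nx) ℝ) (Φue : Matrix (Fin Nu) (Fin Ny) ℝ)
    [Invertible Φxw]
    (hleft_w : (1 - ZA) * Φxw - ZB * Φuw = 1)
    (hleft_e : (1 - ZA) * Φxe - ZB * Φue = 0)
    (hright_x : Φxw * (1 - ZA) - Φxe * ZC = 1)
    (hright_u : Φuw * (1 - ZA) - Φue * ZC = 0) :
    ∀ (w : Fin Nx → ℝ) (e : Fin Ny → ℝ),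
      (Φuw.mulVec (E.mulVec w) + Φue.mulVec (F.mulVec e))
        = (Φue - Φuw * ⅟Φxw * Φxe).mulVec
            (ZC.mulVec (Φxw.mulVec (E.mulVec w) + Φxe.mulVec (F.mulVec e))
              + F.mulVec e) := by
  have hinv : (⅟Φxw : Matrix (Fin Nx) (Fin Nx) ℝ) * Φxw = 1 := invOf_mul_self Φxw
  have h1 : Φue * ZC = Φuw * (1 - ZA) := (sub_eq_zero.mp hright_u).symm
  have h2 : Φxe * ZC = Φxw * (1 - ZA) - 1 := by
    have h := sub_eq_iff_eq_add.mp hright_x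
    rw [h]; abel
  have key : (Φue - Φuw * ⅟Φxw * Φxe) * ZC = Φuw * ⅟Φxw := by
    calc (Φue - Φuw * ⅟Φxw * Φxe) * ZC
        = Φue * ZC - Φuw * ⅟Φxw * (Φxe * ZC) := by rw [Matrix.sub_mul, Matrix.mul_assoc]
      _ = Φuw * (1 - ZA) - Φuw * ⅟Φxw * (Φxw * (1 - ZA) - 1) := by rw [h1, h2]
      _ = Φuw * (1 - ZA) - (Φuw * (1 - ZA) - Φuw * ⅟Φxw) := by
          rw [Matrix.mul_sub (Φuw * ⅟Φxw), Matrix.mul_one, ← Matrix.mul_assoc (Φuw * ⅟Φxw) Φxw (1 - ZA),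
            Matrix.mul_assoc Φuw (⅟Φxw) Φxw, hinv, Matrix.mul_one]
      _ = Φuw * ⅟Φxw := sub_sub_cancel _ _
  intro w e
  have expand :
      (Φue - Φuw * ⅟Φxw * Φxe).mulVec
          (ZC.mulVec (Φxw.mulVec (E.mulVec w) + Φxe.mulVec (F.mulVec e))
            + F.mulVec e)
        = ((Φue - Φuw * ⅟Φxw * Φxe) * ZC * Φxw).mulVec (E.mulVec w)
          + ((Φue - Φuw * ⅟Φxw * Φxe) * ZC * Φxe).mulVec (F.mulVec e)
          + (Φue - Φuw * ⅟Φxw * Φxe).mulVec (F.mulVec e) := by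
    simp [Matrix.mulVec_add, Matrix.mulVec_mulVec, Matrix.mul_assoc, add_assoc]
  rw [expand, key]
  have hA : Φuw * ⅟Φxw * Φxw = Φuw := by
    rw [Matrix.mul_assoc, hinv, Matrix.mul_one]
  rw [hA, Matrix.sub_mulVec]
  abel
end
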